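/- arXiv:0707.1525 — 7 statements merged into one kernel-verified Lean document; each statement's English description precedes it below -/
import Mathlib

section
/- Let R be a commutative ring, C a subset of Spec(R), and 𝒰 an ultrafilter on C. Then the set P_𝒰 := {a ∈ R | {P ∈ C | a ∈ P} ∈ 𝒰} is a prime ideal of R. -/
/-- The ultrafilter limit set: for an ultrafilter `U` on `C ⊆ Spec R`,
`P_U = {a ∈ R | {P ∈ C | a ∈ P} ∈ U}`. -/
def ultraLimit {R : Type*} [CommRing R] (C : Set (PrimeSpectrum R)) (U : Ultrafilter C) :
    Set R :=
  {a : R | {P : C | a ∈ (P : PrimeSpectrum R).asIdeal} ∈ U}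

/-- `C` is ultrafilter closed if it contains every ultrafilter limit prime. -/
def UltraClosed {R : Type*} [CommRing R] (C : Set (PrimeSpectrum R)) : Prop :=
  ∀ U : Ultrafilter C, ∀ P : PrimeSpectrum R, (P.asIdeal : Set R) = ultraLimit C U → P ∈ C

/-- The patch (constructible) topology: the coarsest topology where every `V(I)`
and every `D(a)` is closed; equivalently generated by the Zariski opens together
with the sets `V(a)`. -/
def patchTop (R : Type*) [CommRing R] : TopologicalSpace (PrimeSpectrum R) :=
  TopologicalSpace.generateFrom
    ({s | ∃ I : Ideal R, s = (PrimeSpectrum.zeroLocus (I : Set R))ᶜ} ∪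
     {s | ∃ a : R, s = PrimeSpectrum.zeroLocus {a}})

theorem ultraLimit_isPrime {R : Type*} [CommRing R] (C : Set (PrimeSpectrum R))
    (U : Ultrafilter C) :
    ∃ P : Ideal R, P.IsPrime ∧ (P : Set R) = ultraLimit C U := by
  refine ⟨{ carrier := ultraLimit C U
            zero_mem' := ?_
            add_mem' := ?_
            smul_mem' := ?_ }, ⟨?_, ?_⟩, rfl⟩
  · intro a b ha hb
    filter_upwards [ha, hb] with P h1 h2 using
      (P : PrimeSpectrum R).asIdeal.add_mem h1 h2
  · simp only [ultraLimit, Set.mem_setOf_eq]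
    filter_upwards with P using (P : PrimeSpectrum R).asIdeal.zero_mem
  · intro c a ha
    filter_upwards [ha] with P h using
      (P : PrimeSpectrum R).asIdeal.smul_mem c h
  · intro h1
    have : (1 : R) ∈ ultraLimit C U := by
      have := (Ideal.eq_top_iff_one _).mp h1; exact this
    have : {P : C | (1:R) ∈ (P : PrimeSpectrum R).asIdeal} ∈ U := this
    rcases (U.nonempty_of_mem this) with ⟨P, hP⟩
    exact (P : PrimeSpectrum R).isPrime.ne_top (Ideal.eq_top_iff_one _ |>.mpr hP)
  · intro a b hab
    have hab' : {P : C | a * b ∈ (P : PrimeSpectrum R).asIdeal} ∈ U := hab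
    have : {P : C | a ∈ (P : PrimeSpectrum R).asIdeal} ∪
        {P : C | b ∈ (P : PrimeSpectrum R).asIdeal} ∈ U := by
      filter_upwards [hab'] with P h using
        (P : PrimeSpectrum R).isPrime.mem_or_mem h
    exact (Ultrafilter.union_mem_iff).mp this
end

section
/- Let R be a commutative ring and C ⊆ Spec(R). If C is closed in the patch (constructible) topology on Spec(R), then C is ultrafilter closed, i.e., C contains all its ultrafilter limit primes. -/
theorem patchClosed_ultraClosed {R : Type*} [CommRing R] (C : Set (PrimeSpectrum R))
    (h : @IsClosed _ (patchTop R) C) : UltraClosed C := by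
  intro U P hP
  letI := patchTop R
  have hmem : ∀ a : R, a ∈ P.asIdeal ↔ {Q : C | a ∈ (Q : PrimeSpectrum R).asIdeal} ∈ U := by
    intro a
    constructor
    · intro ha
      have : a ∈ ultraLimit C U := hP ▸ ha
      exact this
    · intro ha
      have : a ∈ ultraLimit C U := ha
      rw [← hP] at this; exact this
  have key : P ∈ closure C := by
    rw [mem_closure_iff_ultrafilter]
    refine ⟨U.map Subtype.val, ?_, ?_⟩
    · have huniv : (Subtype.val ⁻¹' C : Set C) = Set.univ := by
        ext Q; simp [Q.2]
      exact Ultrafilter.mem_map.mpr (huniv ▸ Filter.univ_mem)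
    · show (U.map Subtype.val : Filter _) ≤ @nhds _ (patchTop R) P
      rw [show patchTop R = TopologicalSpace.generateFrom _ from rfl, TopologicalSpace.nhds_generateFrom]
      simp only [le_iInf_iff]
      rintro s ⟨hPs, hs⟩
      rw [Filter.le_principal_iff, Ultrafilter.mem_coe, Ultrafilter.mem_map]
      rcases hs with ⟨I, rfl⟩ | ⟨a, rfl⟩
      · -- s = (zeroLocus I)ᶜ, P ∉ zeroLocus I : ∃ a ∈ I, a ∉ P
        have : ¬ (I : Set R) ⊆ P.asIdeal := hPs
        obtain ⟨a, haI, haP⟩ := Set.not_subset.mp this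
        have h1 : {Q : C | a ∈ (Q : PrimeSpectrum R).asIdeal} ∉ U := fun hh => haP ((hmem a).mpr hh)
        have h2 : {Q : C | a ∈ (Q : PrimeSpectrum R).asIdeal}ᶜ ∈ U :=
          (Ultrafilter.compl_mem_iff_notMem).mpr h1
        refine Filter.mem_of_superset h2 ?_
        intro Q hQ
        simp only [Set.mem_compl_iff, Set.mem_setOf_eq] at hQ ⊢
        intro hcon
        exact hQ (hcon haI)
      · -- s = zeroLocus {a}, a ∈ P
        have ha : a ∈ P.asIdeal := by
          have : (P : PrimeSpectrum R) ∈ PrimeSpectrum.zeroLocus {a} := hPs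
          simpa [PrimeSpectrum.mem_zeroLocus] using this
        refine Filter.mem_of_superset ((hmem a).mp ha) ?_
        intro Q hQ
        simp only [Set.mem_setOf_eq] at hQ
        simpa [PrimeSpectrum.mem_zeroLocus] using hQ
  rwa [h.closure_eq] at key
end

section
/- Let T be a von Neumann regular commutative ring, C ⊆ Spec(T) with C not closed in the Zariski topology. Then there exists an ultrafilter 𝒰 on C whose ultrafilter limit prime P_𝒰 = {a ∈ T | {P ∈ C | a ∈ P} ∈ 𝒰} does not belong to C; i.e., C is not ultrafilter closed. -/
/-- In a von Neumann regular ring, `V(a)` is open. -/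
lemma zeroLocus_isOpen {T : Type*} [CommRing T]
    (hreg : ∀ c : T, ∃ x : T, c ^ 2 * x = c) (a : T) :
    IsOpen (PrimeSpectrum.zeroLocus ({a} : Set T)) := by
  obtain ⟨x, hx⟩ := hreg a
  have : PrimeSpectrum.zeroLocus ({a} : Set T) = ↑(PrimeSpectrum.basicOpen (1 - a * x)) := by
    ext P
    simp only [PrimeSpectrum.mem_zeroLocus, Set.singleton_subset_iff, SetLike.mem_coe,
      PrimeSpectrum.basicOpen_eq_zeroLocus_compl, Set.mem_compl_iff,
      PrimeSpectrum.mem_zeroLocus, Set.singleton_subset_iff]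
    constructor
    · intro ha h1
      have : (1 : T) ∈ P.asIdeal := by
        have := P.asIdeal.add_mem h1 (P.asIdeal.mul_mem_right x ha)
        simpa using this
      exact P.asIdeal.ne_top_iff_one.mp P.isPrime.ne_top this
    · intro h1
      have h0 : a * (1 - a * x) ∈ P.asIdeal := by
        have hz : a * (1 - a * x) = 0 := by linear_combination -hx
        rw [hz]; exact P.asIdeal.zero_mem
      rcases P.isPrime.mem_or_mem h0 with h | h
      · exact h
      · exact absurd h h1
  rw [this]
  exact (PrimeSpectrum.basicOpen _).isOpen

theorem not_ultraClosed_of_not_zariskiClosed {T : Type*} [CommRing T]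
    (hreg : ∀ c : T, ∃ x : T, c ^ 2 * x = c)
    (C : Set (PrimeSpectrum T)) (hC : ¬ IsClosed C) :
    ∃ U : Ultrafilter C, ∀ P : PrimeSpectrum T,
      (P.asIdeal : Set T) = ultraLimit C U → P ∉ C := by
  have hsub : ¬ closure C ⊆ C := fun h =>
    hC (closure_eq_iff_isClosed.mp (subset_antisymm h subset_closure))
  obtain ⟨Q, hQcl, hQC⟩ := Set.not_subset.mp hsub
  rw [mem_closure_iff_ultrafilter] at hQcl
  obtain ⟨u, huC, hu⟩ := hQcl
  have hrange : Set.range (Subtype.val : C → PrimeSpectrum T) ∈ u := by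
    rwa [Subtype.range_coe]
  refine ⟨u.comap Subtype.val_injective hrange, ?_⟩
  have key : ultraLimit C (u.comap Subtype.val_injective hrange) = (Q.asIdeal : Set T) := by
    ext a
    have hset : {P : C | a ∈ (P : PrimeSpectrum T).asIdeal}
        = Subtype.val ⁻¹' PrimeSpectrum.zeroLocus ({a} : Set T) := by
      ext P
      simp [PrimeSpectrum.mem_zeroLocus]
    have hmem : a ∈ ultraLimit C (u.comap Subtype.val_injective hrange)
        ↔ PrimeSpectrum.zeroLocus ({a} : Set T) ∈ u := by
      simp only [ultraLimit, Set.mem_setOf_eq, hset, Ultrafilter.mem_comap]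
      constructor
      · intro h
        exact Filter.mem_of_superset h (Set.image_preimage_subset _ _)
      · intro h
        rw [Set.image_preimage_eq_inter_range]
        exact Filter.inter_mem h hrange
    rw [hmem, SetLike.mem_coe]
    constructor
    · intro h
      by_contra haQ
      have hop : (PrimeSpectrum.zeroLocus ({a} : Set T))ᶜ ∈ u := by
        apply hu
        exact (PrimeSpectrum.isClosed_zeroLocus _).isOpen_compl.mem_nhds
          (by simpa [PrimeSpectrum.mem_zeroLocus] using haQ)
      exact (Ultrafilter.compl_notMem_iff.mpr h) hop
    · intro haQ
      apply hu
      exact (zeroLocus_isOpen hreg a).mem_nhds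
        (by simpa [PrimeSpectrum.mem_zeroLocus] using haQ)
  intro P hP
  rw [key] at hP
  have : P = Q := PrimeSpectrum.ext (SetLike.ext' hP)
  rwa [this]
end

section
/- Let R be a commutative ring and T(R) = R[X_a | a ∈ R]/I_R where I_R is the ideal generated by {a²X_a − a, aX_a² − X_a | a ∈ R}. Then T(R) is von Neumann regular. -/
set_option maxHeartbeats 1000000


open MvPolynomial in
/-- The ideal of relations `a² X_a - a`, `a X_a² - X_a` (one indeterminate per element). -/
noncomputable def TRel (R : Type*) [CommRing R] : Ideal (MvPolynomial R R) :=
  Ideal.span {p : MvPolynomial R R | ∃ a : R,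
    p = C a ^ 2 * X a - C a ∨ p = C a * X a ^ 2 - X a}

/-- The von Neumann regular ring `T(R)` canonically associated with `R`. -/
abbrev TRing (R : Type*) [CommRing R] := MvPolynomial R R ⧸ TRel R

/-- The canonical ring homomorphism `ι : R → T(R)`. -/
noncomputable def iotaT (R : Type*) [CommRing R] : R →+* TRing R :=
  (Ideal.Quotient.mk (TRel R)).comp MvPolynomial.C

namespace TRingAux

open MvPolynomial

variable {R : Type*} [CommRing R]

/-- abbreviation for the quotient map -/
noncomputable def mk : MvPolynomial R R →+* TRing R := Ideal.Quotient.mk (TRel R)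

lemma mk_surj : Function.Surjective (mk (R := R)) := Ideal.Quotient.mk_surjective

lemma rel1 (a : R) : mk (C a) ^ 2 * mk (X a) = mk (C a) := by
  have h : mk (C a ^ 2 * X a - C a) = 0 := by
    rw [mk, Ideal.Quotient.eq_zero_iff_mem]
    exact Ideal.subset_span ⟨a, Or.inl rfl⟩
  rw [map_sub, map_mul, map_pow, sub_eq_zero] at h
  exact h

lemma rel2 (a : R) : mk (C a) * mk (X a) ^ 2 = mk (X a) := by
  have h : mk (C a * X a ^ 2 - X a) = 0 := by
    rw [mk, Ideal.Quotient.eq_zero_iff_mem]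
    exact Ideal.subset_span ⟨a, Or.inr rfl⟩
  rw [map_sub, map_mul, map_pow, sub_eq_zero] at h
  exact h

/-- the idempotent attached to `a` -/
noncomputable def e (a : R) : TRing R := mk (C a) * mk (X a)

lemma e_idem (a : R) : e a * e a = e a := by
  unfold e
  linear_combination mk (C a) * rel2 a

lemma X_mul_e (a : R) : mk (X a) * e a = mk (X a) := by
  unfold e
  linear_combination rel2 a

/-- `X_a^n * a^(n-k) * e = X_a^k * e` for `k ≤ n`. -/
lemma X_pow_e (a : R) {k n : ℕ} (hk : k ≤ n) :
    mk (X a) ^ n * mk (C a) ^ (n - k) * e a = mk (X a) ^ k * e a := by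
  obtain ⟨d, rfl⟩ : ∃ d, n = k + d := ⟨n - k, (Nat.add_sub_cancel' hk).symm⟩
  rw [Nat.add_sub_cancel_left]
  have key : ∀ d : ℕ, mk (X a) ^ d * mk (C a) ^ d * e a = e a := by
    intro d
    induction d with
    | zero => simp
    | succ d ih =>
      have : mk (X a) ^ (d + 1) * mk (C a) ^ (d + 1) * e a
          = mk (X a) ^ d * mk (C a) ^ d * (mk (X a) * e a * mk (C a)) := by ring
      rw [this, X_mul_e]
      have : mk (X a) ^ d * mk (C a) ^ d * (mk (X a) * mk (C a))
          = mk (X a) ^ d * mk (C a) ^ d * e a := by unfold e; ring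
      rw [this, ih]
  calc mk (X a) ^ (k + d) * mk (C a) ^ d * e a
      = mk (X a) ^ k * (mk (X a) ^ d * mk (C a) ^ d * e a) := by ring
    _ = mk (X a) ^ k * e a := by rw [key d]

lemma X_pow_one_sub_e (a : R) {k : ℕ} (hk : k ≠ 0) :
    mk (X a) ^ k * (1 - e a) = 0 := by
  obtain ⟨d, rfl⟩ : ∃ d, k = d + 1 := ⟨k - 1, (Nat.succ_pred_eq_of_pos (Nat.pos_of_ne_zero hk)).symm⟩
  have : mk (X a) ^ (d + 1) * (1 - e a) = mk (X a) ^ d * (mk (X a) - mk (X a) * e a) := by ring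
  rw [this, X_mul_e, sub_self, mul_zero]

/-- splitting a monomial off its `a`-part -/
lemma monomial_split (a : R) (m : R →₀ ℕ) (c : R) :
    mk (monomial m c) = mk (X a) ^ (m a) * mk (monomial (m.erase a) c) := by
  rw [← map_pow, ← map_mul]
  congr 1
  rw [X_pow_eq_monomial, monomial_mul, one_mul, Finsupp.single_add_erase]

/-- regular elements are closed under multiplication -/
lemma reg_mul {s t : TRing R} (hs : ∃ x, s ^ 2 * x = s) (ht : ∃ x, t ^ 2 * x = t) :
    ∃ x, (s * t) ^ 2 * x = s * t := by
  obtain ⟨x, hx⟩ := hs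
  obtain ⟨y, hy⟩ := ht
  exact ⟨x * y, by linear_combination t ^ 2 * y * hx + s * hy⟩

lemma reg_C (a : R) : ∃ x, (mk (C a) : TRing R) ^ 2 * x = mk (C a) := ⟨mk (X a), rel1 a⟩

lemma reg_X (a : R) : ∃ x, (mk (X a) : TRing R) ^ 2 * x = mk (X a) :=
  ⟨mk (C a), by linear_combination rel2 a⟩

lemma reg_pow {s : TRing R} (hs : ∃ x, s ^ 2 * x = s) (n : ℕ) :
    ∃ x, (s ^ n) ^ 2 * x = s ^ n := by
  induction n with
  | zero => exact ⟨1, by simp⟩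
  | succ k ihk =>
    obtain ⟨x, hx⟩ := reg_mul ihk hs
    exact ⟨x, by rw [pow_succ s k]; exact hx⟩

lemma reg_idem {u : TRing R} (hu : u * u = u) : ∃ x, u ^ 2 * x = u :=
  ⟨1, by linear_combination hu⟩

/-- splitting along an idempotent -/
lemma reg_split {u t : TRing R} (hu : u * u = u)
    (h1 : ∃ x, (u * t) ^ 2 * x = u * t) (h2 : ∃ x, ((1 - u) * t) ^ 2 * x = (1 - u) * t) :
    ∃ x, t ^ 2 * x = t := by
  obtain ⟨x, hx⟩ := h1
  obtain ⟨y, hy⟩ := h2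
  refine ⟨u * x + (1 - u) * y, ?_⟩
  have e1 : t ^ 2 * (u * x) = u * t := by linear_combination hx - t ^ 2 * x * hu
  have e2 : t ^ 2 * ((1 - u) * y) = (1 - u) * t := by
    linear_combination hy - t ^ 2 * y * hu
  linear_combination e1 + e2

theorem main (p : MvPolynomial R R) : ∃ x, (mk p : TRing R) ^ 2 * x = mk p := by
  classical
  suffices H : ∀ N : ℕ, ∀ p : MvPolynomial R R, p.vars.card ≤ N →
      ∃ x, (mk p : TRing R) ^ 2 * x = mk p from H p.vars.card p le_rfl
  intro N
  induction N with
  | zero =>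
    intro p hp
    have hv : p.vars = ∅ := Finset.card_eq_zero.mp (Nat.le_zero.mp hp)
    -- p is a constant
    have hpC : p = C (p.coeff 0) := by
      have : ∀ m ∈ p.support, m = 0 := by
        intro m hm
        ext b
        by_contra hb
        have : b ∈ p.vars := (mem_vars b).mpr ⟨m, hm, Finsupp.mem_support_iff.mpr hb⟩
        simp [hv] at this
      rcases Finset.eq_empty_or_nonempty p.support with h | h
      · rw [MvPolynomial.support_eq_empty.mp h]
        simp
      · obtain ⟨m, hm⟩ := h
        have hm0 := this m hm
        subst hm0
        have hsupp : p.support = {0} := by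
          apply Finset.eq_singleton_iff_unique_mem.mpr
          exact ⟨hm, fun x hx => this x hx⟩
        conv_lhs => rw [← support_sum_monomial_coeff p]
        rw [hsupp, Finset.sum_singleton, monomial_zero']
    rw [hpC]
    exact reg_C _
  | succ N ih =>
    intro p hp
    rcases Finset.eq_empty_or_nonempty p.vars with hv | ⟨a, ha⟩
    · exact ih p (by simp [hv])
    -- eliminate the variable a
    set n : ℕ := p.support.sup fun m => m a with hn
    set q : MvPolynomial R R :=
      ∑ m ∈ p.support, C (a ^ (n - m a)) * monomial (m.erase a) (p.coeff m) with hq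
    set r : MvPolynomial R R :=
      ∑ m ∈ p.support, if m a = 0 then monomial m (p.coeff m) else 0 with hr
    -- variable bounds
    have hqv : q.vars ⊆ p.vars.erase a := by
      refine (vars_sum_subset _ _).trans ?_
      intro b hb
      rw [Finset.mem_biUnion] at hb
      obtain ⟨m, hm, hbm⟩ := hb
      have h1 : (C (a ^ (n - m a)) * monomial (m.erase a) (p.coeff m)).vars
          ⊆ (m.erase a).support := by
        refine (vars_mul _ _).trans ?_
        rw [vars_C, Finset.empty_union]
        rcases eq_or_ne (p.coeff m) 0 with h | h
        · simp [h]
        · rw [vars_monomial h]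
      have hb2 := h1 hbm
      rw [Finsupp.support_erase, Finset.mem_erase] at hb2
      refine Finset.mem_erase.mpr ⟨hb2.1, (mem_vars b).mpr ⟨m, hm, hb2.2⟩⟩
    have hrv : r.vars ⊆ p.vars.erase a := by
      refine (vars_sum_subset _ _).trans ?_
      intro b hb
      rw [Finset.mem_biUnion] at hb
      obtain ⟨m, hm, hbm⟩ := hb
      by_cases hma : m a = 0
      · rw [if_pos hma] at hbm
        have h1 : (monomial m (p.coeff m)).vars ⊆ m.support := by
          rcases eq_or_ne (p.coeff m) 0 with h | h
          · simp [h]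
          · rw [vars_monomial h]
        have hb2 := h1 hbm
        refine Finset.mem_erase.mpr ⟨?_, (mem_vars b).mpr ⟨m, hm, hb2⟩⟩
        rintro rfl
        exact absurd hma (Finsupp.mem_support_iff.mp hb2)
      · rw [if_neg hma] at hbm
        simp at hbm
    have hqcard : q.vars.card ≤ N := by
      have := Finset.card_le_card hqv
      have h2 : (p.vars.erase a).card < p.vars.card := Finset.card_erase_lt_of_mem ha
      omega
    have hrcard : r.vars.card ≤ N := by
      have := Finset.card_le_card hrv
      have h2 : (p.vars.erase a).card < p.vars.card := Finset.card_erase_lt_of_mem ha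
      omega
    -- quotient identities
    have key1 : e a * mk p = mk (X a) ^ n * e a * mk q := by
      conv_lhs => rw [← support_sum_monomial_coeff p]
      rw [hq, map_sum, map_sum, Finset.mul_sum, Finset.mul_sum]
      refine Finset.sum_congr rfl fun m hm => ?_
      have hle : m a ≤ n := Finset.le_sup (f := fun m => m a) hm
      rw [monomial_split a m (p.coeff m), map_mul,
        show (C (a ^ (n - m a)) : MvPolynomial R R) = C a ^ (n - m a) from map_pow C a _,
        map_pow]
      linear_combination (-(mk (monomial (m.erase a) (p.coeff m)) : TRing R)) * X_pow_e a hle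
    have key2 : (1 - e a) * mk p = (1 - e a) * mk r := by
      conv_lhs => rw [← support_sum_monomial_coeff p]
      rw [hr, map_sum, map_sum, Finset.mul_sum, Finset.mul_sum]
      refine Finset.sum_congr rfl fun m hm => ?_
      by_cases hma : m a = 0
      · rw [if_pos hma]
      · rw [if_neg hma, map_zero, mul_zero, monomial_split a m (p.coeff m)]
        have : (1 - e a) * (mk (X a) ^ (m a) * mk (monomial (m.erase a) (p.coeff m)))
            = (mk (X a) ^ (m a) * (1 - e a)) * mk (monomial (m.erase a) (p.coeff m)) := by ring
        rw [this, X_pow_one_sub_e a hma, zero_mul]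
    -- combine
    refine reg_split (e_idem a) ?_ ?_
    · rw [key1]
      exact reg_mul (reg_mul (reg_pow (reg_X a) n) (reg_idem (e_idem a))) (ih q hqcard)
    · rw [key2]
      exact reg_mul (reg_idem (by linear_combination e_idem a)) (ih r hrcard)

end TRingAux

theorem TRing_vonNeumannRegular (R : Type*) [CommRing R] :
    ∀ t : TRing R, ∃ x : TRing R, t ^ 2 * x = t := by
  intro t
  obtain ⟨p, rfl⟩ := TRingAux.mk_surj t
  exact TRingAux.main p
end

section
/- Let R be a commutative ring and T(R) its canonically associated von Neumann regular ring. The canonical ring homomorphism ι: R → T(R) induces a continuous bijection ι^a: Spec(T(R)) → Spec(R) (with Zariski topologies), given by contraction Q ↦ ι⁻¹(Q). -/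
/-!
The relations say that `X_a` is a quasi-inverse of `ι a`, i.e. `a² X_a = a` and `a X_a² = X_a`.
Quasi-inverses are unique in any commutative ring, so a ring map out of `T(R)` is determined
by its restriction to `R`. A prime `p` of `R` gives a map `T(R) → κ(p)` sending `X_a` to `a⁻¹`
(or `0`); it is surjective, so its kernel is a maximal ideal lying over `p`. Conversely, for a
prime `Q` of `T(R)` over `p`, the maps `T(R) → κ(p) → κ(Q)` and `T(R) → κ(Q)` agree on `R`,
hence coincide, so `Q` contains that maximal ideal and equals it.
-/

theorem quasiInverse_unique {S : Type*} [CommRing S] {u v w : S}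
    (hv₁ : u ^ 2 * v = u) (hv₂ : u * v ^ 2 = v) (hw₁ : u ^ 2 * w = u) (hw₂ : u * w ^ 2 = w) :
    v = w := by
  -- both `v` and `w` equal `u * v * w`
  linear_combination (u * w - 1) * hv₂ - v ^ 2 * hw₁ + (1 - u * v) * hw₂ + w ^ 2 * hv₁

namespace TRing

variable {R : Type*} [CommRing R]

noncomputable def X (a : R) : TRing R :=
  Ideal.Quotient.mk (TRel R) (MvPolynomial.X a)

theorem iotaT_sq_mul_X (a : R) : iotaT R a ^ 2 * X a = iotaT R a := by
  rw [← sub_eq_zero]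
  exact Ideal.Quotient.eq_zero_iff_mem.mpr (Ideal.subset_span ⟨a, Or.inl rfl⟩)

theorem iotaT_mul_X_sq (a : R) : iotaT R a * X a ^ 2 = X a := by
  rw [← sub_eq_zero]
  exact Ideal.Quotient.eq_zero_iff_mem.mpr (Ideal.subset_span ⟨a, Or.inr rfl⟩)

theorem map_iotaT_sq_mul_map_X {S : Type*} [CommRing S] (f : TRing R →+* S) (a : R) :
    f (iotaT R a) ^ 2 * f (X a) = f (iotaT R a) := by
  rw [← map_pow, ← map_mul, iotaT_sq_mul_X]

theorem map_iotaT_mul_map_X_sq {S : Type*} [CommRing S] (f : TRing R →+* S) (a : R) :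
    f (iotaT R a) * f (X a) ^ 2 = f (X a) := by
  rw [← map_pow, ← map_mul, iotaT_mul_X_sq]

/-- `ι : R → T(R)` is an epimorphism of rings. -/
theorem ringHom_ext {S : Type*} [CommRing S] {f g : TRing R →+* S}
    (h : f.comp (iotaT R) = g.comp (iotaT R)) : f = g := by
  have hι (a : R) : f (iotaT R a) = g (iotaT R a) := RingHom.congr_fun h a
  refine Ideal.Quotient.ringHom_ext (MvPolynomial.ringHom_ext hι fun a => ?_)
  change f (X a) = g (X a)
  refine quasiInverse_unique (map_iotaT_sq_mul_map_X f a) (map_iotaT_mul_map_X_sq f a) ?_ ?_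
  · rw [hι]; exact map_iotaT_sq_mul_map_X g a
  · rw [hι]; exact map_iotaT_mul_map_X_sq g a

section lift

variable {S : Type*} [CommRing S] (f : R →+* S) (v : R → S)
  (h₁ : ∀ a, f a ^ 2 * v a = f a) (h₂ : ∀ a, f a * v a ^ 2 = v a)

noncomputable def lift : TRing R →+* S :=
  Ideal.Quotient.lift (TRel R) (MvPolynomial.eval₂Hom f v) fun p hp => by
    refine RingHom.mem_ker.mp <| (Ideal.span_le (I := RingHom.ker _)).mpr ?_ hp
    rintro _ ⟨a, rfl | rfl⟩ <;> simp [h₁, h₂]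

@[simp]
theorem lift_iotaT (a : R) : lift f v h₁ h₂ (iotaT R a) = f a := by
  rw [lift, iotaT, RingHom.comp_apply, Ideal.Quotient.lift_mk, MvPolynomial.eval₂Hom_C]

@[simp]
theorem lift_X (a : R) : lift f v h₁ h₂ (X a) = v a := by
  rw [lift, X, Ideal.Quotient.lift_mk, MvPolynomial.eval₂Hom_X']

end lift

noncomputable def liftInv {K : Type*} [Field K] (f : R →+* K) : TRing R →+* K :=
  lift f (fun a => (f a)⁻¹) (fun a => by rw [sq, mul_self_mul_inv])
    (fun a => by rw [sq, ← mul_assoc]; simpa using inv_mul_mul_self (f a)⁻¹)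

section residueField

variable (p : Ideal R) [p.IsPrime]

noncomputable abbrev toResidueField : TRing R →+* p.ResidueField :=
  liftInv (algebraMap R p.ResidueField)

theorem toResidueField_surjective : Function.Surjective (toResidueField p) := by
  intro z
  obtain ⟨x, y, -, rfl⟩ := IsFractionRing.div_surjective (R ⧸ p) z
  obtain ⟨a, rfl⟩ := Ideal.Quotient.mk_surjective x
  obtain ⟨b, rfl⟩ := Ideal.Quotient.mk_surjective y
  exact ⟨iotaT R a * X b, by simp [liftInv, div_eq_mul_inv]⟩

theorem comap_ker_toResidueField : (RingHom.ker (toResidueField p)).comap (iotaT R) = p := by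
  ext a
  simp [liftInv]

theorem ker_toResidueField_le (Q : Ideal (TRing R)) [Q.IsPrime] (hQ : p = Q.comap (iotaT R)) :
    RingHom.ker (toResidueField p) ≤ Q := by
  have hcomp : (Ideal.ResidueField.map p Q (iotaT R) hQ).comp (toResidueField p) =
      algebraMap (TRing R) Q.ResidueField :=
    ringHom_ext (RingHom.ext fun a => by simp [liftInv])
  intro t ht
  rw [← Q.ker_algebraMap_residueField, RingHom.mem_ker, ← hcomp, RingHom.comp_apply,
    RingHom.mem_ker.mp ht, map_zero]

end residueField

noncomputable def primeOver (P : PrimeSpectrum R) : PrimeSpectrum (TRing R) :=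
  ⟨RingHom.ker (toResidueField P.asIdeal),
    (RingHom.ker_isMaximal_of_surjective _ (toResidueField_surjective P.asIdeal)).isPrime⟩

theorem comap_primeOver (P : PrimeSpectrum R) :
    PrimeSpectrum.comap (iotaT R) (primeOver P) = P :=
  PrimeSpectrum.ext (comap_ker_toResidueField P.asIdeal)

theorem primeOver_comap (Q : PrimeSpectrum (TRing R)) :
    primeOver (PrimeSpectrum.comap (iotaT R) Q) = Q :=
  PrimeSpectrum.ext <|
    (RingHom.ker_isMaximal_of_surjective _ (toResidueField_surjective _)).eq_of_le
      Q.isPrime.ne_top (ker_toResidueField_le _ Q.asIdeal rfl)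

end TRing

theorem comap_iotaT_continuous_bijective (R : Type*) [CommRing R] :
    Continuous (PrimeSpectrum.comap (iotaT R)) ∧
      Function.Bijective (PrimeSpectrum.comap (iotaT R)) :=
  ⟨PrimeSpectrum.continuous_comap (iotaT R),
    Function.LeftInverse.injective TRing.primeOver_comap,
    Function.RightInverse.surjective TRing.comap_primeOver⟩
end

section
/- Let R be a commutative ring. The canonical map ι: R → T(R) into its associated von Neumann regular ring is an isomorphism if and only if R is von Neumann regular. -/
open MvPolynomial in
theorem iotaT_bijective_iff_vonNeumannRegular (R : Type*) [CommRing R] :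
    Function.Bijective ⇑(iotaT R) ↔ ∀ a : R, ∃ x : R, a ^ 2 * x = a := by
  constructor
  · intro hb a
    obtain ⟨x, hxp⟩ := hb.2 (Ideal.Quotient.mk (TRel R) (X a))
    refine ⟨x, hb.1 ?_⟩
    have hmem : (C x - X a : MvPolynomial R R) ∈ TRel R := by
      rw [← Ideal.Quotient.eq]; exact hxp
    show Ideal.Quotient.mk (TRel R) (C (a ^ 2 * x)) = Ideal.Quotient.mk (TRel R) (C a)
    rw [Ideal.Quotient.eq]
    have key : (C (a ^ 2 * x) - C a : MvPolynomial R R) =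
        C a ^ 2 * (C x - X a) + (C a ^ 2 * X a - C a) := by
      rw [map_mul, map_pow]; ring
    rw [key]
    exact add_mem (Ideal.mul_mem_left _ _ hmem) (Ideal.subset_span ⟨a, Or.inl rfl⟩)
  · intro h
    set x : R → R := fun a => Classical.choose (h a) with hxdef
    have hx : ∀ a, a ^ 2 * x a = a := fun a => Classical.choose_spec (h a)
    set φ : MvPolynomial R R →+* R :=
      eval₂Hom (RingHom.id R) (fun a => (x a) ^ 2 * a) with hφdef
    have hker : ∀ p ∈ TRel R, φ p = 0 := by
      intro p hp
      refine (Ideal.span_le (I := RingHom.ker φ)).mpr ?_ hp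
      rintro q ⟨a, rfl | rfl⟩
      · simp only [RingHom.mem_ker, SetLike.mem_coe, map_sub, map_mul, map_pow, hφdef,
          eval₂Hom_C, eval₂Hom_X', RingHom.id_apply]
        linear_combination (a * x a + 1) * hx a
      · simp only [RingHom.mem_ker, SetLike.mem_coe, map_sub, map_mul, map_pow, hφdef,
          eval₂Hom_C, eval₂Hom_X', RingHom.id_apply]
        linear_combination (a * (x a) ^ 3 + (x a) ^ 2) * hx a
    set ψ : TRing R →+* R := Ideal.Quotient.lift (TRel R) φ hker with hψdef
    have hleft : ∀ r : R, ψ (iotaT R r) = r := by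
      intro r
      simp [hψdef, hφdef, iotaT, Ideal.Quotient.lift_mk]
    have hcomp : (iotaT R).comp ψ = RingHom.id (TRing R) := by
      refine Ideal.Quotient.ringHom_ext (MvPolynomial.ringHom_ext (fun a => ?_) (fun a => ?_))
      · show iotaT R (ψ (Ideal.Quotient.mk (TRel R) (C a))) = Ideal.Quotient.mk (TRel R) (C a)
        have hc : ψ (Ideal.Quotient.mk (TRel R) (C a)) = a := hleft a
        rw [hc]; rfl
      · show iotaT R (ψ (Ideal.Quotient.mk (TRel R) (X a))) = Ideal.Quotient.mk (TRel R) (X a)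
        have hφX : φ (X a) = (x a) ^ 2 * a := by simp [hφdef]
        have : ψ (Ideal.Quotient.mk (TRel R) (X a)) = (x a) ^ 2 * a := by
          rw [hψdef, Ideal.Quotient.lift_mk, hφX]
        rw [this]
        show Ideal.Quotient.mk (TRel R) (C ((x a) ^ 2 * a)) = Ideal.Quotient.mk (TRel R) (X a)
        rw [Ideal.Quotient.eq]
        have h1 : (C a ^ 2 * X a - C a : MvPolynomial R R) ∈ TRel R :=
          Ideal.subset_span ⟨a, Or.inl rfl⟩
        have h2 : (C a * X a ^ 2 - X a : MvPolynomial R R) ∈ TRel R :=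
          Ideal.subset_span ⟨a, Or.inr rfl⟩
        have hC : (C a : MvPolynomial R R) ^ 2 * C (x a) = C a := by
          rw [← map_pow, ← map_mul, hx a]
        have key : (C ((x a) ^ 2 * a) - X a : MvPolynomial R R) =
            (C a * X a ^ 2 - X a) - (C (x a) * X a + C (x a) ^ 2) * (C a ^ 2 * X a - C a) := by
          rw [map_mul, map_pow]
          linear_combination (X a ^ 2 + C (x a) * X a) * hC
        rw [key]
        exact sub_mem h2 (Ideal.mul_mem_left _ _ h1)
    constructor
    · intro a b hab
      have := congrArg ψ hab
      rwa [hleft a, hleft b] at this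
    · intro t
      exact ⟨ψ t, by simpa using RingHom.congr_fun hcomp t⟩
end

section
/- Let R be a commutative ring. Then the patch (constructible) topology and the ultrafilter topology on Spec(R) are identical: a subset C ⊆ Spec(R) is patch closed if and only if it contains the ultrafilter limit prime P_𝒰 for every ultrafilter 𝒰 on C. -/
theorem patchClosed_iff_ultraClosed {R : Type*} [CommRing R] (C : Set (PrimeSpectrum R)) :
    @IsClosed _ (patchTop R) C ↔ UltraClosed C := by
  constructor
  · intro hC U P hP
    by_contra hPC
    -- key claim: every patch-open set containing P is U-large
    have key : ∀ O : Set (PrimeSpectrum R),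
        TopologicalSpace.GenerateOpen
          ({s | ∃ I : Ideal R, s = (PrimeSpectrum.zeroLocus (I : Set R))ᶜ} ∪
           {s | ∃ a : R, s = PrimeSpectrum.zeroLocus {a}}) O →
        P ∈ O → {Q : C | (Q : PrimeSpectrum R) ∈ O} ∈ U := by
      intro O hO
      induction hO with
      | basic s hs =>
        intro hPs
        rcases hs with ⟨I, rfl⟩ | ⟨a, rfl⟩
        · -- s = (zeroLocus I)ᶜ
          simp only [Set.mem_compl_iff, PrimeSpectrum.mem_zeroLocus, Set.not_subset] at hPs
          obtain ⟨a, haI, haP⟩ := hPs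
          have haU : {Q : C | a ∈ (Q : PrimeSpectrum R).asIdeal} ∉ U := by
            intro h
            exact haP (by rw [hP]; exact h)
          have := (Ultrafilter.compl_mem_iff_notMem (f := U)).2 haU
          refine U.toFilter.mem_of_superset this ?_
          intro Q hQ
          simp only [Set.mem_compl_iff, Set.mem_setOf_eq] at hQ ⊢
          rw [PrimeSpectrum.mem_zeroLocus]
          intro hsub
          exact hQ (hsub haI)
        · -- s = zeroLocus {a}
          simp only [PrimeSpectrum.mem_zeroLocus, Set.singleton_subset_iff] at hPs
          have : a ∈ ultraLimit C U := by rw [← hP]; exact hPs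
          refine U.toFilter.mem_of_superset this ?_
          intro Q hQ
          simp only [Set.mem_setOf_eq] at hQ ⊢
          rw [PrimeSpectrum.mem_zeroLocus, Set.singleton_subset_iff]
          exact hQ
      | univ => intro _; exact Filter.univ_mem
      | inter s t _ _ ihs iht =>
        intro hPst
        have := Filter.inter_mem (ihs hPst.1) (iht hPst.2)
        exact Filter.mem_of_superset this (fun Q hQ => ⟨hQ.1, hQ.2⟩)
      | sUnion S _ ih =>
        intro hPS
        obtain ⟨s, hsS, hPs⟩ := hPS
        exact Filter.mem_of_superset (ih s hsS hPs) (fun Q hQ => ⟨s, hsS, hQ⟩)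
    have hopen : TopologicalSpace.GenerateOpen _ Cᶜ := hC.isOpen_compl
    have := key Cᶜ hopen hPC
    have hempty : {Q : C | (Q : PrimeSpectrum R) ∈ Cᶜ} = ∅ := by
      ext Q; simp [Q.2]
    rw [hempty] at this
    exact U.toFilter.empty_notMem this
  · intro hU
    classical
    letI := patchTop R
    have hsub : closure C ⊆ C := by
      intro P hP
      -- family of sets on C
      set S : R → Set C := fun a =>
        {Q : C | a ∈ (Q : PrimeSpectrum R).asIdeal ↔ a ∈ P.asIdeal} with hS
      -- corresponding open sets in patchTop
      set T : R → Set (PrimeSpectrum R) := fun a =>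
        if a ∈ P.asIdeal then PrimeSpectrum.zeroLocus {a}
        else (PrimeSpectrum.zeroLocus {a})ᶜ with hT
      have hTopen : ∀ a, IsOpen (T a) := by
        intro a
        rw [hT]
        by_cases h : a ∈ P.asIdeal
        · simp only [if_pos h]
          exact TopologicalSpace.GenerateOpen.basic _ (Or.inr ⟨a, rfl⟩)
        · simp only [if_neg h]
          refine TopologicalSpace.GenerateOpen.basic _ (Or.inl ⟨Ideal.span {a}, ?_⟩)
          rw [PrimeSpectrum.zeroLocus_span]
      have hTP : ∀ a, P ∈ T a := by
        intro a
        rw [hT]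
        by_cases h : a ∈ P.asIdeal
        · simp only [if_pos h]
          rw [PrimeSpectrum.mem_zeroLocus, Set.singleton_subset_iff]; exact h
        · simp only [if_neg h, Set.mem_compl_iff, PrimeSpectrum.mem_zeroLocus,
            Set.singleton_subset_iff]
          exact h
      have hTmem : ∀ a, ∀ Q : PrimeSpectrum R, Q ∈ T a → (a ∈ Q.asIdeal ↔ a ∈ P.asIdeal) := by
        intro a Q hQ
        rw [hT] at hQ
        by_cases h : a ∈ P.asIdeal
        · simp only [if_pos h, PrimeSpectrum.mem_zeroLocus, Set.singleton_subset_iff] at hQ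
          simpa [h] using hQ
        · simp only [if_neg h, Set.mem_compl_iff, PrimeSpectrum.mem_zeroLocus,
            Set.singleton_subset_iff] at hQ
          simpa [h] using hQ
      -- finite intersection property
      have hFIP : ∀ t ⊆ Set.range S, t.Finite → (⋂₀ t).Nonempty := by
        intro t hts htf
        choose f hf using fun x : t => hts x.2
        have hNopen : IsOpen (⋂ x ∈ (Set.univ : Set t), T (f x)) := by
          refine Set.Finite.isOpen_biInter ?_ (fun x _ => hTopen _)
          haveI := htf.to_subtype
          exact Set.finite_univ
        have hPN : P ∈ ⋂ x ∈ (Set.univ : Set t), T (f x) :=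
          Set.mem_biInter fun x _ => hTP _
        obtain ⟨Q, hQN, hQC⟩ := (mem_closure_iff.1 hP) _ hNopen hPN
        refine ⟨⟨Q, hQC⟩, ?_⟩
        intro s hst
        have : (⟨Q, hQC⟩ : C) ∈ S (f ⟨s, hst⟩) := by
          rw [hS]
          exact hTmem _ Q (Set.mem_iInter₂.1 hQN ⟨s, hst⟩ trivial)
        rwa [hf ⟨s, hst⟩] at this
      -- build an ultrafilter
      have hne : (Filter.generate (Set.range S)).NeBot := Filter.generate_neBot_iff.2 hFIP
      obtain ⟨U, hUle⟩ := Ultrafilter.exists_le (Filter.generate (Set.range S))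
      have hSU : ∀ a, S a ∈ U := fun a =>
        hUle (Filter.mem_generate_of_mem (Set.mem_range_self a))
      refine hU U P ?_
      ext a
      simp only [ultraLimit, SetLike.mem_coe, Set.mem_setOf_eq]
      constructor
      · intro ha
        exact U.toFilter.mem_of_superset (hSU a) (fun Q hQ => hQ.2 ha)
      · intro ha
        by_contra haP
        have h1 : {Q : C | a ∈ (Q : PrimeSpectrum R).asIdeal} ∩ S a ∈ U :=
          Filter.inter_mem ha (hSU a)
        obtain ⟨Q, hQ1, hQ2⟩ := U.nonempty_of_mem h1
        exact haP (hQ2.1 hQ1)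
    exact isClosed_of_closure_subset hsub
end
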